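/- arXiv:0903.4965 — 6 statements merged into one kernel-verified Lean document; each statement's English description precedes it below -/
import Mathlib

section
/- Let p be a prime, r ≥ 1, and a_1 ≥ a_2 ≥ ⋯ ≥ a_r ≥ 1 integers; write a = a_1, let s be the number of indices j with a_j = a, and v = ∑_{j=2}^{r} (a_j − 1). Then E(p^{a_1}, p^{a_2}, …, p^{a_r}) = (p−1)^{r−s+1} · p^{v} · h_s(p), where h_s(x) = ((x−1)^{s−1} + (−1)^s)/x. -/
/-- The von Sterneck function `Φ(k,n) = μ(n/gcd(k,n)) * φ(n) / φ(n/gcd(k,n))`. -/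
noncomputable def vonSterneck (k n : ℕ) : ℚ :=
  (ArithmeticFunction.moebius (n / Nat.gcd k n) : ℚ) * (Nat.totient n : ℚ) /
    (Nat.totient (n / Nat.gcd k n) : ℚ)

/-- The orbicyclic function `E(m_1,…,m_r)`. -/
noncomputable def orbE {r : ℕ} (m : Fin r → ℕ) : ℚ :=
  (∑ k ∈ Finset.Icc 1 (Finset.univ.lcm m), ∏ j, vonSterneck k (m j)) /
    ((Finset.univ.lcm m : ℕ) : ℚ)

/-- The polynomial `h_s(x) = ((x-1)^(s-1) + (-1)^s)/x`. -/
noncomputable def hpoly (s : ℕ) (x : ℚ) : ℚ := ((x - 1) ^ (s - 1) + (-1) ^ s) / x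

/-!
Let `a = a₁` be the largest exponent. Since `Φ(k, p^a) = 0` unless `p^(a-1) ∣ k`, only
`k = p^(a-1) c` with `1 ≤ c ≤ p` contribute. For such `k` every factor `Φ(k, p^(a_j))` is
`φ(p^(a_j)) = p^(a_j - 1) (p - 1)`, except that for the `s` indices with `a_j = a` it is
`-p^(a-1)` when `p ∤ c`. Hence the sum is
`p^(∑ (a_j - 1)) ((p-1)^r + (p-1) (-1)^s (p-1)^(r-s))`, and dividing by `p^a` and factoring
out `(p-1)^(r-s+1)` leaves `((p-1)^(s-1) + (-1)^s) / p = h_s(p)`.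
-/

open Finset

lemma vonSterneck_of_dvd {k n : ℕ} (h : n ∣ k) : vonSterneck k n = n.totient := by
  rcases eq_or_ne n 0 with rfl | hn
  · simp [vonSterneck]
  · simp [vonSterneck, Nat.gcd_eq_right h, Nat.div_self (Nat.pos_of_ne_zero hn)]

lemma vonSterneck_prime_pow_eq_zero {p b k : ℕ} (hp : p.Prime) (h : ¬ p ^ (b - 1) ∣ k) :
    vonSterneck k (p ^ b) = 0 := by
  obtain ⟨t, htb, hgcd⟩ := (Nat.dvd_prime_pow hp).mp (Nat.gcd_dvd_right k (p ^ b))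
  have ht : t + 2 ≤ b := by
    by_contra! hbt
    exact h ((pow_dvd_pow p (by omega)).trans (hgcd ▸ Nat.gcd_dvd_left k (p ^ b)))
  rw [vonSterneck, hgcd, Nat.pow_div htb hp.pos,
    ArithmeticFunction.moebius_apply_prime_pow hp (by omega), if_neg (by omega)]
  simp

lemma vonSterneck_prime_pow_succ_mul {p c : ℕ} (hp : p.Prime) (hc : ¬ p ∣ c) (t : ℕ) :
    vonSterneck (p ^ t * c) (p ^ (t + 1)) = -(p : ℚ) ^ t := by
  have hgcd : Nat.gcd (p ^ t * c) (p ^ (t + 1)) = p ^ t := by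
    rw [pow_succ, Nat.gcd_mul_left, Nat.Coprime.gcd_eq_one, mul_one]
    exact (Nat.coprime_comm.mp ((Nat.Prime.coprime_iff_not_dvd hp).mpr hc))
  have hφ : (Nat.totient p : ℚ) ≠ 0 := by exact_mod_cast (Nat.totient_pos.mpr hp.pos).ne'
  rw [vonSterneck, hgcd, pow_succ, Nat.mul_div_cancel_left _ (pow_pos hp.pos t),
    ArithmeticFunction.moebius_apply_prime hp, ← pow_succ, Nat.totient_prime_pow_succ hp,
    ← Nat.totient_prime hp]
  push_cast
  field_simp

lemma vonSterneck_prime_pow_mul {p b n : ℕ} (hp : p.Prime) (hb : 1 ≤ b) (hbn : b ≤ n) (c : ℕ) :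
    vonSterneck (p ^ (n - 1) * c) (p ^ b) =
      (p : ℚ) ^ (b - 1) * if b = n ∧ ¬ p ∣ c then -1 else (p : ℚ) - 1 := by
  split_ifs with h
  · obtain ⟨rfl, hc⟩ := h
    obtain ⟨t, rfl⟩ : ∃ t, b = t + 1 := ⟨b - 1, by omega⟩
    simpa using vonSterneck_prime_pow_succ_mul hp hc t
  · have hdvd : p ^ b ∣ p ^ (n - 1) * c := by
      by_cases hbn' : b = n
      · obtain ⟨d, rfl⟩ : p ∣ c := by tauto
        rw [← mul_assoc, ← pow_succ, Nat.sub_add_cancel (by omega), hbn']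
        exact dvd_mul_right _ _
      · exact (pow_dvd_pow p (by omega)).trans (dvd_mul_right _ _)
    rw [vonSterneck_of_dvd hdvd, Nat.totient_prime_pow hp hb]
    push_cast [Nat.cast_sub hp.one_le]
    ring

lemma sum_Icc_mul_of_eq_zero {M : Type*} [AddCommMonoid M] {d : ℕ} (hd : d ≠ 0) (n : ℕ)
    {f : ℕ → M} (hf : ∀ k, ¬ d ∣ k → f k = 0) :
    ∑ k ∈ Icc 1 (d * n), f k = ∑ c ∈ Icc 1 n, f (d * c) := by
  symm
  refine sum_bij_ne_zero (fun c _ _ => d * c) ?_ ?_ ?_ (fun _ _ _ => rfl)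
  · intro c hc _
    simp only [mem_Icc] at hc ⊢
    exact ⟨by nlinarith [Nat.pos_of_ne_zero hd], Nat.mul_le_mul_left d hc.2⟩
  · intro c _ _ c' _ _ h
    exact Nat.eq_of_mul_eq_mul_left (Nat.pos_of_ne_zero hd) h
  · intro k hk hfk
    obtain ⟨c, rfl⟩ : d ∣ k := by_contra fun h => hfk (hf k h)
    simp only [mem_Icc] at hk
    refine ⟨c, mem_Icc.mpr ⟨?_, ?_⟩, hfk, rfl⟩
    · rcases Nat.eq_zero_or_pos c with rfl | h
      · simp at hk
      · exact h
    · exact Nat.le_of_mul_le_mul_left hk.2 (Nat.pos_of_ne_zero hd)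

lemma lcm_pow_eq_of_le {ι : Type*} {s : Finset ι} {i : ι} (hi : i ∈ s) (p : ℕ) {a : ι → ℕ}
    (hle : ∀ j ∈ s, a j ≤ a i) : s.lcm (fun j => p ^ a j) = p ^ a i :=
  Nat.dvd_antisymm (Finset.lcm_dvd fun j hj => pow_dvd_pow p (hle j hj)) (Finset.dvd_lcm hi)

lemma prod_vonSterneck_prime_pow_mul {ι : Type*} [Fintype ι] {p n : ℕ} (hp : p.Prime)
    {a : ι → ℕ} (ha : ∀ j, 1 ≤ a j) (hle : ∀ j, a j ≤ n) (c : ℕ) :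
    ∏ j, vonSterneck (p ^ (n - 1) * c) (p ^ a j) =
      (p : ℚ) ^ (∑ j, (a j - 1)) * ∏ j, if a j = n ∧ ¬ p ∣ c then -1 else (p : ℚ) - 1 := by
  simp_rw [vonSterneck_prime_pow_mul hp (ha _) (hle _), prod_mul_distrib, prod_pow_eq_pow_sum]

lemma sum_prod_vonSterneck_prime_pow {ι : Type*} [Fintype ι] {p : ℕ} (hp : p.Prime)
    {a : ι → ℕ} {i : ι} (ha : ∀ j, 1 ≤ a j) (hle : ∀ j, a j ≤ a i) :
    ∑ k ∈ Icc 1 (p ^ a i), ∏ j, vonSterneck k (p ^ a j) =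
      (p : ℚ) ^ (∑ j, (a j - 1)) * (((p : ℚ) - 1) ^ Fintype.card ι + ((p : ℚ) - 1) *
        ((-1) ^ #{j | a j = a i} * ((p : ℚ) - 1) ^ (Fintype.card ι - #{j | a j = a i}))) := by
  have hpow : p ^ a i = p ^ (a i - 1) * p := by rw [← pow_succ, Nat.sub_add_cancel (ha i)]
  have hIcc : Icc 1 p = insert p (Icc 1 (p - 1)) := by
    ext c
    simp only [mem_Icc, mem_insert]
    have := hp.one_le
    omega
  have hcoprime : ∀ c ∈ Icc 1 (p - 1), ∏ j, (if a j = a i ∧ ¬ p ∣ c then -1 else (p : ℚ) - 1) =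
      (-1) ^ #{j | a j = a i} * ((p : ℚ) - 1) ^ (Fintype.card ι - #{j | a j = a i}) := by
    intro c hc
    have hc : ¬ p ∣ c := by
      rw [mem_Icc] at hc
      exact Nat.not_dvd_of_pos_of_lt (by omega) (by omega)
    simp only [hc, not_false_eq_true, and_true]
    rw [prod_ite, prod_const, prod_const, ← card_univ,
      ← card_filter_add_card_filter_not (s := univ) (fun j => a j = a i), Nat.add_sub_cancel_left]
  rw [hpow, sum_Icc_mul_of_eq_zero (pow_ne_zero _ hp.ne_zero) p
      (fun k hk => prod_eq_zero (mem_univ i) (vonSterneck_prime_pow_eq_zero hp hk))]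
  simp_rw [prod_vonSterneck_prime_pow_mul hp ha hle]
  rw [hIcc, sum_insert (by simp [hp.pos]), ← mul_sum, sum_congr rfl hcoprime]
  simp [Nat.cast_sub hp.one_le, mul_add]

lemma sub_one_pow_add_sub_one_mul_neg_one_pow {x : ℚ} (hx : x ≠ 0) {s : ℕ} (hs : 1 ≤ s) :
    (x - 1) ^ s + (x - 1) * (-1) ^ s = x * (x - 1) * hpoly s x := by
  obtain ⟨t, rfl⟩ : ∃ t, s = t + 1 := ⟨s - 1, by omega⟩
  rw [hpoly, Nat.add_sub_cancel]
  field_simp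
  ring

theorem orbE_prime_pow (p r : ℕ) (hp : p.Prime) (hr : 1 ≤ r) (a : Fin r → ℕ)
    (ha : ∀ j, 1 ≤ a j) (hmono : Antitone a) :
    orbE (fun j => p ^ a j) =
      ((p : ℚ) - 1) ^
          (r - (Finset.univ.filter fun j => a j = a ⟨0, hr⟩).card + 1) *
        (p : ℚ) ^ (∑ j ∈ Finset.univ.erase ⟨0, hr⟩, (a j - 1)) *
        hpoly (Finset.univ.filter fun j => a j = a ⟨0, hr⟩).card (p : ℚ) := by
  set i₀ : Fin r := ⟨0, hr⟩
  set s := #{j | a j = a i₀}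
  set v := ∑ j ∈ univ.erase i₀, (a j - 1)
  have hle : ∀ j, a j ≤ a i₀ := fun j => hmono (Fin.le_def.mpr (Nat.zero_le _))
  have hs : 1 ≤ s := card_pos.mpr ⟨i₀, by simp⟩
  have hsr : s ≤ r := (card_filter_le _ _).trans_eq (card_fin r)
  have hp₀ : (p : ℚ) ≠ 0 := by exact_mod_cast hp.ne_zero
  have hpow : (p : ℚ) ^ a i₀ = p ^ (a i₀ - 1) * p := by
    rw [← pow_succ, Nat.sub_add_cancel (ha i₀)]
  have hsplit : ((p : ℚ) - 1) ^ r = ((p : ℚ) - 1) ^ (r - s) * ((p : ℚ) - 1) ^ s := by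
    rw [← pow_add, Nat.sub_add_cancel hsr]
  rw [orbE, lcm_pow_eq_of_le (mem_univ i₀) p (fun j _ => hle j),
    sum_prod_vonSterneck_prime_pow hp ha hle, ← add_sum_erase _ _ (mem_univ i₀), Fintype.card_fin,
    Nat.cast_pow, hpow, hsplit]
  calc _ = (p : ℚ) ^ v * ((p : ℚ) - 1) ^ (r - s) *
        (((p : ℚ) - 1) ^ s + ((p : ℚ) - 1) * (-1) ^ s) / p := by
        field_simp
        ring
    _ = _ := by
        rw [sub_one_pow_add_sub_one_mul_neg_one_pow hp₀ hs]
        field_simp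
        ring
end

section
/- Let f : ℕ × ℕ → ℚ be a function such that for each positive integer n, f(·,n) is periodic in its first argument modulo n (f(k₁,n) = f(k₂,n) whenever k₁ ≡ k₂ (mod n)), and such that f(k, n₁n₂) = f(k,n₁)·f(k,n₂) for every k and all coprime positive integers n₁, n₂. For a tuple of positive integers (m_1,…,m_r), r ≥ 1, define F(m_1,…,m_r) = (1/M)·∑_{k=1}^{M} f(k,m_1)·f(k,m_2)·⋯·f(k,m_r), where M = m_1·m_2·⋯·m_r. Then whenever m_j = m_j'·m_j'' for j = 1,…,r with gcd(∏_j m_j', ∏_j m_j'') = 1, one has F(m_1,…,m_r) = F(m_1',…,m_r') · F(m_1'',…,m_r''). -/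
/-!
Multiplicativity of `f k` splits each summand as `g' k * g'' k`, where `g' k = ∏ j, f k (m' j)`
has period `M' = ∏ j, m' j` and `g'' k = ∏ j, f k (m'' j)` has period `M'' = ∏ j, m'' j`. As
`M'` and `M''` are coprime, `k ↦ (k % M', k % M'')` is a bijection from residues mod `M' * M''`
onto pairs of residues (Chinese remainder theorem), so the sum of `g' * g''` over a full period
factors as the product of the sums of `g'` and `g''`.
-/

open Finset Function

theorem Function.Periodic.sum_Ico_add_eq_sum_range {M : Type*} [AddCommMonoid M] {g : ℕ → M}
    {a : ℕ} (hg : Periodic g a) (n : ℕ) : ∑ k ∈ Ico n (n + a), g k = ∑ k ∈ range a, g k := by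
  rw [Finset.sum, Finset.sum, range_val, ← Nat.multiset_Ico_map_mod n a, Multiset.map_map]
  exact congrArg Multiset.sum (Multiset.map_congr rfl fun k _ => (hg.map_mod_nat k).symm)

theorem Function.Periodic.sum_Icc_one_eq_sum_range {M : Type*} [AddCommMonoid M] {g : ℕ → M}
    {a : ℕ} (hg : Periodic g a) : ∑ k ∈ Icc 1 a, g k = ∑ k ∈ range a, g k := by
  rw [← Ico_add_one_right_eq_Icc, add_comm, hg.sum_Ico_add_eq_sum_range]

theorem Finset.periodic_prod_prod {ι M : Type*} [CommMonoid M] (s : Finset ι) {g : ι → ℕ → M}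
    {c : ι → ℕ} (hg : ∀ i ∈ s, Periodic (g i) (c i)) :
    Periodic (fun k => ∏ i ∈ s, g i k) (∏ i ∈ s, c i) := fun k => by
  refine prod_congr rfl fun i hi => ?_
  obtain ⟨q, hq⟩ := dvd_prod_of_mem c hi
  rw [hq, mul_comm]
  exact (hg i hi).nat_mul q k

theorem Nat.Coprime.sum_range_mul_mul {R : Type*} [CommSemiring R] {a b : ℕ} (hab : a.Coprime b)
    {g h : ℕ → R} (hg : Periodic g a) (hh : Periodic h b) :
    ∑ k ∈ range (a * b), g k * h k = (∑ i ∈ range a, g i) * ∑ j ∈ range b, h j := by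
  rcases Nat.eq_zero_or_pos a with rfl | ha
  · simp
  rcases Nat.eq_zero_or_pos b with rfl | hb
  · simp
  rw [sum_mul_sum, ← sum_product']
  refine sum_nbij' (fun k => (k % a, k % b)) (fun p => Nat.chineseRemainder hab p.1 p.2)
    ?_ ?_ ?_ ?_ ?_
  · intro k _
    simpa using ⟨Nat.mod_lt k ha, Nat.mod_lt k hb⟩
  · intro p _
    simpa using Nat.chineseRemainder_lt_mul hab p.1 p.2 ha.ne' hb.ne'
  · intro k hk
    refine (Nat.chineseRemainder_modEq_unique hab (Nat.mod_modEq k a).symm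
      (Nat.mod_modEq k b).symm).symm.eq_of_lt_of_lt ?_ (by simpa using hk)
    exact Nat.chineseRemainder_lt_mul hab _ _ ha.ne' hb.ne'
  · rintro ⟨i, j⟩ hij
    rw [mem_product, mem_range, mem_range] at hij
    obtain ⟨hi, hj⟩ := (Nat.chineseRemainder hab i j).2
    simp [Nat.mod_eq_of_modEq hi hij.1, Nat.mod_eq_of_modEq hj hij.2]
  · intro k _
    rw [hg.map_mod_nat, hh.map_mod_nat]

theorem semiMultiplicative_of_periodic_general (f : ℕ → ℕ → ℚ)
    (hper : ∀ n : ℕ, 0 < n → ∀ k₁ k₂ : ℕ, k₁ % n = k₂ % n → f k₁ n = f k₂ n)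
    (hmul : ∀ k n₁ n₂ : ℕ, 0 < n₁ → 0 < n₂ → Nat.Coprime n₁ n₂ →
      f k (n₁ * n₂) = f k n₁ * f k n₂)
    (r : ℕ) (m' m'' : Fin r → ℕ)
    (hm' : ∀ j, 0 < m' j) (hm'' : ∀ j, 0 < m'' j)
    (hcop : Nat.Coprime (∏ j, m' j) (∏ j, m'' j)) :
    (∑ k ∈ Finset.Icc 1 (∏ j, (m' j * m'' j)), ∏ j, f k (m' j * m'' j)) /
        ((∏ j, (m' j * m'' j) : ℕ) : ℚ) =
      ((∑ k ∈ Finset.Icc 1 (∏ j, m' j), ∏ j, f k (m' j)) / ((∏ j, m' j : ℕ) : ℚ)) *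
        ((∑ k ∈ Finset.Icc 1 (∏ j, m'' j), ∏ j, f k (m'' j)) / ((∏ j, m'' j : ℕ) : ℚ)) := by
  have hperiodic : ∀ n, 0 < n → Periodic (f · n) n := fun n hn k =>
    hper n hn _ _ (Nat.add_mod_right k n)
  have hg' := univ.periodic_prod_prod fun j _ => hperiodic (m' j) (hm' j)
  have hg'' := univ.periodic_prod_prod fun j _ => hperiodic (m'' j) (hm'' j)
  have hsplit : ∀ k, ∏ j, f k (m' j * m'' j) = (∏ j, f k (m' j)) * ∏ j, f k (m'' j) := by
    intro k
    rw [← prod_mul_distrib]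
    exact prod_congr rfl fun j _ => hmul k _ _ (hm' j) (hm'' j)
      (hcop.of_dvd (dvd_prod_of_mem _ (mem_univ j)) (dvd_prod_of_mem _ (mem_univ j)))
  simp_rw [hsplit, prod_mul_distrib]
  have hg'g'' : Periodic (fun k => (∏ j, f k (m' j)) * ∏ j, f k (m'' j))
      ((∏ j, m' j) * ∏ j, m'' j) :=
    (mul_comm (∏ j, m'' j) _ ▸ hg'.nat_mul _).mul (hg''.nat_mul _)
  rw [hg'g''.sum_Icc_one_eq_sum_range, hg'.sum_Icc_one_eq_sum_range,
    hg''.sum_Icc_one_eq_sum_range, hcop.sum_range_mul_mul hg' hg'', Nat.cast_mul,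
    div_mul_div_comm]

theorem semiMultiplicative_of_periodic (f : ℕ → ℕ → ℚ)
    (hper : ∀ n : ℕ, 0 < n → ∀ k₁ k₂ : ℕ, k₁ % n = k₂ % n → f k₁ n = f k₂ n)
    (hmul : ∀ k n₁ n₂ : ℕ, 0 < n₁ → 0 < n₂ → Nat.Coprime n₁ n₂ →
      f k (n₁ * n₂) = f k n₁ * f k n₂)
    (r : ℕ) (hr : 1 ≤ r) (m' m'' : Fin r → ℕ)
    (hm' : ∀ j, 0 < m' j) (hm'' : ∀ j, 0 < m'' j)
    (hcop : Nat.Coprime (∏ j, m' j) (∏ j, m'' j)) :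
    (∑ k ∈ Finset.Icc 1 (∏ j, (m' j * m'' j)), ∏ j, f k (m' j * m'' j)) /
        ((∏ j, (m' j * m'' j) : ℕ) : ℚ) =
      ((∑ k ∈ Finset.Icc 1 (∏ j, m' j), ∏ j, f k (m' j)) / ((∏ j, m' j : ℕ) : ℚ)) *
        ((∑ k ∈ Finset.Icc 1 (∏ j, m'' j), ∏ j, f k (m'' j)) / ((∏ j, m'' j : ℕ) : ℚ)) :=
  semiMultiplicative_of_periodic_general f hper hmul r m' m'' hm' hm'' hcop
end

section
/- For any tuple of positive integers (m_1,…,m_r) with m = lcm(m_1,…,m_r): if m = 1 then E(m_1,…,m_r) = 1, and if m > 1 then E(m_1,…,m_r) = ∏_{p prime, p | m} E(p^{a_1(p)}, p^{a_2(p)}, …, p^{a_r(p)}), where a_j(p) is the exponent of p in m_j. In other words, E is a multiplicative multivariate arithmetic function. -/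
/-! Φ(k, n) depends only on k mod n and is multiplicative in n. Hence the summand of E(m) is
periodic modulo every common multiple N of the m_j, and E(m) is its average over any such period.
If m_j = a_j b_j with a_j ∣ A, b_j ∣ B and A, B coprime, the summand factors as an A-periodic
times a B-periodic function, and the Chinese remainder theorem splits the average over AB into
the product of the averages: E(m) = E(a) E(b). Splitting off one prime at a time, with
a_j = p^(v_p(m_j)), gives the product formula. -/

open Finset Function

namespace Function.Periodic

variable {M : Type*} [AddCommMonoid M] {f : ℕ → M} {n : ℕ}

theorem sum_Icc_one_eq_sum_range_s6 (hf : Periodic f n) :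
    ∑ k ∈ Icc 1 n, f k = ∑ k ∈ range n, f k := by
  rcases n with _ | n
  · simp
  rw [← Ico_add_one_right_eq_Icc, sum_Ico_eq_sum_range, Nat.add_sub_cancel, sum_range_succ,
    sum_range_succ', add_comm 1 n, hf.eq]
  simp only [add_comm 1]

theorem sum_range_mul (hf : Periodic f n) (c : ℕ) :
    ∑ k ∈ range (c * n), f k = c • ∑ k ∈ range n, f k := by
  induction c with
  | zero => simp
  | succ c ih =>
    rw [add_mul, one_mul, sum_range_add, ih, succ_nsmul]
    congr 1
    refine sum_congr rfl fun k _ => ?_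
    simpa [add_comm] using hf.nat_mul c k

theorem sum_range_mul_of_coprime {R : Type*} [CommSemiring R] {F G : ℕ → R} {a b : ℕ}
    (hF : Periodic F a) (hG : Periodic G b) (hab : a.Coprime b) (ha : a ≠ 0) (hb : b ≠ 0) :
    ∑ k ∈ range (a * b), F k * G k = (∑ k ∈ range a, F k) * ∑ k ∈ range b, G k := by
  rw [sum_mul_sum, ← sum_product']
  refine sum_nbij' (fun k => (k % a, k % b)) (fun x => Nat.chineseRemainder hab x.1 x.2)
    ?_ ?_ ?_ ?_ ?_
  · intro k _
    simp [Nat.mod_lt, Nat.pos_of_ne_zero, ha, hb]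
  · intro x _
    simpa using Nat.chineseRemainder_lt_mul hab x.1 x.2 ha hb
  · intro k hk
    exact (Nat.chineseRemainder_modEq_unique hab (Nat.mod_modEq k a).symm
      (Nat.mod_modEq k b).symm).symm.eq_of_lt_of_lt
      (Nat.chineseRemainder_lt_mul hab _ _ ha hb) (by simpa using hk)
  · rintro ⟨x, y⟩ hxy
    rw [mem_product, mem_range, mem_range] at hxy
    obtain ⟨hx, hy⟩ := (Nat.chineseRemainder hab x y).prop
    simp only [Prod.mk.injEq]
    exact ⟨Eq.trans hx (Nat.mod_eq_of_lt hxy.1), Eq.trans hy (Nat.mod_eq_of_lt hxy.2)⟩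
  · intro k _
    rw [hF.map_mod_nat, hG.map_mod_nat]

end Function.Periodic

namespace Nat

theorem primeFactors_ordCompl (n p : ℕ) :
    (ordCompl[p] n).primeFactors = n.primeFactors.erase p := by
  rw [← support_factorization, factorization_ordCompl, Finsupp.support_erase,
    support_factorization]

theorem ordProj_ordCompl_of_ne {p q : ℕ} (h : q ≠ p) (n : ℕ) :
    ordProj[q] (ordCompl[p] n) = ordProj[q] n := by
  rw [factorization_ordCompl, Finsupp.erase_ne h]

theorem ordCompl_lt {n p : ℕ} (hp : p.Prime) (hn : n ≠ 0) (hpn : p ∣ n) :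
    ordCompl[p] n < n :=
  div_lt_self (pos_of_ne_zero hn)
    (one_lt_pow (hp.factorization_pos_of_dvd hn hpn).ne' hp.one_lt)

end Nat

theorem vonSterneck_one (k : ℕ) : vonSterneck k 1 = 1 := by
  simp [vonSterneck]

theorem periodic_vonSterneck (n : ℕ) : Periodic (fun k => vonSterneck k n) n := by
  intro k
  simp only [vonSterneck, Nat.gcd_add_self_left]

theorem periodic_vonSterneck_of_dvd {n N : ℕ} (h : n ∣ N) :
    Periodic (fun k => vonSterneck k n) N := by
  obtain ⟨c, rfl⟩ := h
  simpa [mul_comm] using (periodic_vonSterneck n).nat_mul c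

theorem vonSterneck_mul_of_coprime {a b : ℕ} (ha : 0 < a) (hb : 0 < b) (hab : a.Coprime b)
    (k : ℕ) : vonSterneck k (a * b) = vonSterneck k a * vonSterneck k b := by
  have ha' : 0 < a / k.gcd a :=
    Nat.div_pos (Nat.gcd_le_right (m := k) ha) (Nat.gcd_pos_of_pos_right k ha)
  have hb' : 0 < b / k.gcd b :=
    Nat.div_pos (Nat.gcd_le_right (m := k) hb) (Nat.gcd_pos_of_pos_right k hb)
  have hcop : (a / k.gcd a).Coprime (b / k.gcd b) :=
    (hab.coprime_div_left (Nat.gcd_dvd_right k a)).coprime_div_right (Nat.gcd_dvd_right k b)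
  have hq : a * b / k.gcd (a * b) = a / k.gcd a * (b / k.gcd b) := by
    rw [hab.gcd_mul k, Nat.div_mul_div_comm (Nat.gcd_dvd_right k a) (Nat.gcd_dvd_right k b)]
  rw [vonSterneck, vonSterneck, vonSterneck, hq,
    ArithmeticFunction.isMultiplicative_moebius.map_mul_of_coprime hcop,
    Nat.totient_mul hab, Nat.totient_mul hcop]
  have hφa := (Nat.totient_pos.2 ha').ne'
  have hφb := (Nat.totient_pos.2 hb').ne'
  push_cast
  field_simp

theorem periodic_prod_vonSterneck {ι : Type*} [Fintype ι] {m : ι → ℕ} {N : ℕ}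
    (hmN : ∀ j, m j ∣ N) : Periodic (fun k => ∏ j, vonSterneck k (m j)) N :=
  fun k => prod_congr rfl fun j _ => periodic_vonSterneck_of_dvd (hmN j) k

section orbE

variable {r : ℕ}

theorem orbE_one : orbE (1 : Fin r → ℕ) = 1 := by
  simp [orbE, vonSterneck_one]

theorem orbE_eq_sum_range_div (m : Fin r → ℕ) {N : ℕ} (hN : N ≠ 0) (hmN : ∀ j, m j ∣ N) :
    orbE m = (∑ k ∈ range N, ∏ j, vonSterneck k (m j)) / N := by
  obtain ⟨c, rfl⟩ : univ.lcm m ∣ N := Finset.lcm_dvd fun j _ => hmN j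
  have hper := periodic_prod_vonSterneck (m := m) fun j => dvd_lcm (mem_univ j)
  have hc : (c : ℚ) ≠ 0 := by exact_mod_cast right_ne_zero_of_mul hN
  rw [orbE, hper.sum_Icc_one_eq_sum_range_s6, mul_comm, hper.sum_range_mul, nsmul_eq_mul,
    Nat.cast_mul, mul_div_mul_left _ _ hc]

theorem orbE_mul_of_coprime {a b : Fin r → ℕ} {A B : ℕ} (hA : A ≠ 0) (hB : B ≠ 0)
    (hAB : A.Coprime B) (ha : ∀ j, a j ∣ A) (hb : ∀ j, b j ∣ B) :
    orbE (a * b) = orbE a * orbE b := by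
  have hsplit (k : ℕ) : ∏ j, vonSterneck k ((a * b) j) =
      (∏ j, vonSterneck k (a j)) * ∏ j, vonSterneck k (b j) := by
    rw [← prod_mul_distrib]
    exact prod_congr rfl fun j _ => vonSterneck_mul_of_coprime
      (Nat.pos_of_dvd_of_pos (ha j) (Nat.pos_of_ne_zero hA))
      (Nat.pos_of_dvd_of_pos (hb j) (Nat.pos_of_ne_zero hB)) (hAB.of_dvd (ha j) (hb j)) k
  rw [orbE_eq_sum_range_div (a * b) (mul_ne_zero hA hB) fun j => mul_dvd_mul (ha j) (hb j),
    orbE_eq_sum_range_div a hA ha, orbE_eq_sum_range_div b hB hb,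
    sum_congr rfl fun k _ => hsplit k,
    (periodic_prod_vonSterneck ha).sum_range_mul_of_coprime (periodic_prod_vonSterneck hb)
      hAB hA hB, Nat.cast_mul, mul_div_mul_comm]

theorem orbE_eq_prod_primeFactors_of_dvd {N : ℕ} (hN : N ≠ 0) (m : Fin r → ℕ)
    (hmN : ∀ j, m j ∣ N) :
    orbE m = ∏ p ∈ N.primeFactors, orbE (fun j => ordProj[p] (m j)) := by
  induction N using Nat.strong_induction_on generalizing m with
  | _ N ih =>
  rcases eq_or_ne N 1 with rfl | hN1
  · rw [show m = 1 from funext fun j => Nat.dvd_one.1 (hmN j), orbE_one, Nat.primeFactors_one,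
      prod_empty]
  obtain ⟨p, hp, hpN⟩ := Nat.exists_prime_and_dvd hN1
  have hcompl := ih _ (Nat.ordCompl_lt hp hN hpN) (Nat.ordCompl_pos p hN).ne'
    (fun j => ordCompl[p] (m j)) fun j => Nat.ordCompl_dvd_ordCompl_of_dvd (hmN j) p
  rw [Nat.primeFactors_ordCompl] at hcompl
  calc orbE m = orbE ((fun j => ordProj[p] (m j)) * fun j => ordCompl[p] (m j)) := by
        congr 1
        exact funext fun j => (Nat.ordProj_mul_ordCompl_eq_self (m j) p).symm
    _ = orbE (fun j => ordProj[p] (m j)) * orbE (fun j => ordCompl[p] (m j)) :=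
        orbE_mul_of_coprime (pow_ne_zero _ hp.ne_zero) (Nat.ordCompl_pos p hN).ne'
          ((Nat.coprime_ordCompl hp hN).pow_left _)
          (fun j => Nat.ordProj_dvd_ordProj_of_dvd hN (hmN j) p)
          fun j => Nat.ordCompl_dvd_ordCompl_of_dvd (hmN j) p
    _ = orbE (fun j => ordProj[p] (m j)) *
          ∏ q ∈ N.primeFactors.erase p, orbE (fun j => ordProj[q] (m j)) := by
        rw [hcompl]
        congr 1
        refine prod_congr rfl fun q hq => ?_
        simp only [Nat.ordProj_ordCompl_of_ne (ne_of_mem_erase hq)]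
    _ = ∏ p ∈ N.primeFactors, orbE (fun j => ordProj[p] (m j)) :=
        mul_prod_erase _ (fun q => orbE fun j => ordProj[q] (m j))
          (Nat.mem_primeFactors.2 ⟨hp, hpN, hN⟩)

end orbE

theorem orbE_multiplicative_general {r : ℕ} (m : Fin r → ℕ) :
    (Finset.univ.lcm m = 1 → orbE m = 1) ∧
    (1 < Finset.univ.lcm m →
      orbE m = ∏ p ∈ (Finset.univ.lcm m).primeFactors,
        orbE (fun j => p ^ (m j).factorization p)) := by
  have hprod (h : univ.lcm m ≠ 0) :=
    orbE_eq_prod_primeFactors_of_dvd h m fun j => dvd_lcm (mem_univ j)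
  refine ⟨fun h1 => ?_, fun h1 => hprod (by omega)⟩
  simpa [h1] using hprod (by omega)

theorem orbE_multiplicative {r : ℕ} (m : Fin r → ℕ) (hm : ∀ j, 0 < m j) :
    (Finset.univ.lcm m = 1 → orbE m = 1) ∧
    (1 < Finset.univ.lcm m →
      orbE m = ∏ p ∈ (Finset.univ.lcm m).primeFactors,
        orbE (fun j => p ^ (m j).factorization p)) :=
  orbE_multiplicative_general m
end

section
/- For every tuple of positive integers (m_1,…,m_r), the rational number E(m_1,…,m_r) is a non-negative integer; that is, there exists a natural number N with E(m_1,…,m_r) = N. -/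
/-!
`Φ(k, n)` is the Ramanujan sum `∑ η ^ k` over the primitive `n`-th roots of unity `η`
(Hölder's evaluation). Write `η = ζ ^ u` with `u ∈ (ZMod n)ˣ`, `g = gcd k n` and `n' = n / g`:
`η ^ k = ((ζ ^ g) ^ u) ^ (k / g)` only depends on `u mod n'`, the reduction
`(ZMod n)ˣ → (ZMod n')ˣ` is onto with fibres of size `φ n / φ n'`, the power `k / g` permutes the
primitive `n'`-th roots, and these sum to `μ n'` by Möbius inversion of
`∑_{d ∣ n} ∑_{η primitive d-th} η = [n = 1]`. Expanding the product over `j` and using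
`∑_{k=1}^{m} z ^ k = m · [z = 1]` for `z ^ m = 1`, `E(m_1, …, m_r)` counts the tuples
`(η_1, …, η_r)` of primitive `m_j`-th roots of unity with `η_1 ⋯ η_r = 1`.
-/

open Finset

theorem MonoidHom.card_smul_sum_comp_of_surjective {G H M : Type*} [Group G] [Fintype G]
    [Group H] [Fintype H] [AddCommMonoid M] (π : G →* H) (hπ : Function.Surjective π)
    (f : H → M) :
    Fintype.card H • ∑ g, f (π g) = Fintype.card G • ∑ h, f h := by
  classical
  have hfiber (h : H) : #{g | π g = h} = #{g | π g = 1} :=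
    MonoidHom.card_fiber_eq_of_mem_range π (hπ h) (hπ 1)
  have hsum : ∑ g, f (π g) = #{g | π g = 1} • ∑ h, f h := by
    rw [← sum_fiberwise univ π, smul_sum]
    refine sum_congr rfl fun h _ => ?_
    rw [sum_congr rfl fun g hg => congrArg f (mem_filter.1 hg).2, sum_const, hfiber]
  have hcard : Fintype.card G = #{g | π g = 1} * Fintype.card H := by
    rw [← card_univ, card_eq_sum_card_fiberwise fun g _ => mem_univ (π g)]
    simp [hfiber, mul_comm]
  rw [hsum, hcard, smul_comm, mul_smul]

namespace IsPrimitiveRoot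

variable {R : Type*} [CommRing R] [IsDomain R] {ζ : R} {n : ℕ}

theorem sum_primitiveRoots_eq_sum_units {M : Type*} [AddCommMonoid M] [NeZero n]
    (hζ : IsPrimitiveRoot ζ n) (f : R → M) :
    ∑ η ∈ primitiveRoots n R, f η = ∑ u : (ZMod n)ˣ, f (ζ ^ (u : ZMod n).val) := by
  symm
  refine sum_nbij (fun u => ζ ^ (u : ZMod n).val) ?_ ?_ ?_ fun _ _ => rfl
  · intro u _
    rw [mem_primitiveRoots (NeZero.pos n)]
    exact hζ.pow_of_coprime _ (ZMod.val_coe_unit_coprime u)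
  · intro u _ v _ h
    exact Units.ext (ZMod.val_injective n (hζ.pow_inj (ZMod.val_lt _) (ZMod.val_lt _) h))
  · intro η hη
    obtain ⟨i, hi, hcop, rfl⟩ :=
      hζ.isPrimitiveRoot_iff.1 ((mem_primitiveRoots (NeZero.pos n)).1 hη)
    refine ⟨ZMod.unitOfCoprime i hcop, mem_coe.2 (mem_univ _), ?_⟩
    simp [ZMod.val_natCast, Nat.mod_eq_of_lt hi]

theorem sum_nthRootsFinset_one (hζ : IsPrimitiveRoot ζ n) (hn : 0 < n) :
    ∑ η ∈ Polynomial.nthRootsFinset n (1 : R), η = if n = 1 then 1 else 0 := by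
  classical
  have himage : (range n).image (ζ ^ ·) = Polynomial.nthRootsFinset n (1 : R) := by
    refine eq_of_subset_of_card_le (image_subset_iff.2 fun i _ => ?_) ?_
    · rw [Polynomial.mem_nthRootsFinset hn, ← pow_mul, mul_comm, pow_mul, hζ.pow_eq_one, one_pow]
    · rw [hζ.card_nthRootsFinset, card_image_of_injOn hζ.injOn_pow, card_range]
  rw [← himage, sum_image hζ.injOn_pow]
  split_ifs with h1
  · simp [h1]
  · exact hζ.geom_sum_eq_zero (by omega)

theorem sum_primitiveRoots_eq_moebius (hζ : IsPrimitiveRoot ζ n) :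
    ∑ η ∈ primitiveRoots n R, η = ArithmeticFunction.moebius n := by
  classical
  rcases n.eq_zero_or_pos with rfl | hn
  · simp
  have hdivisors : ∀ d > 0, d ∈ {d | d ∣ n} →
      ∑ e ∈ d.divisors, ∑ η ∈ primitiveRoots e R, η = if d = 1 then 1 else 0 := by
    intro d hd hdn
    rw [← sum_biUnion fun _ _ _ _ h => IsPrimitiveRoot.disjoint h,
      ← nthRoots_one_eq_biUnion_primitiveRoots]
    exact (hζ.pow hn (Nat.div_mul_cancel hdn).symm).sum_nthRootsFinset_one hd
  rw [← (ArithmeticFunction.sum_eq_iff_sum_mul_moebius_eq_on _ fun a b hab hb => hab.trans hb).1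
    hdivisors n hn dvd_rfl, sum_eq_single (n, 1)]
  · simp
  · rintro ⟨a, b⟩ hab hne
    rw [if_neg, mul_zero]
    rintro rfl
    exact hne (by simp_all)
  · simp [hn.ne']

theorem sum_primitiveRoots_pow_of_coprime [NeZero n] {k : ℕ}
    (hk : k.Coprime n) : ∑ η ∈ primitiveRoots n R, η ^ k = ∑ η ∈ primitiveRoots n R, η := by
  rw [← sum_coe_sort (primitiveRoots n R), ← sum_coe_sort (primitiveRoots n R)]
  exact Fintype.sum_equiv (primitiveRootsPowEquivOfCoprime hk) _ _ fun _ => rfl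

theorem sum_primitiveRoots_pow_eq_vonSterneck {K : Type*} [Field K] [CharZero K] {ζ : K}
    [NeZero n] (hζ : IsPrimitiveRoot ζ n) (k : ℕ) :
    ∑ η ∈ primitiveRoots n K, η ^ k = vonSterneck k n := by
  set g := k.gcd n
  set n' := n / g
  have hg : 0 < g := Nat.gcd_pos_of_pos_right k (NeZero.pos n)
  have hn : n = g * n' := (Nat.mul_div_cancel' (Nat.gcd_dvd_right k n)).symm
  have hk : k = g * (k / g) := (Nat.mul_div_cancel' (Nat.gcd_dvd_left k n)).symm
  have : NeZero n' := ⟨fun h => NeZero.ne n (by rw [hn, h, mul_zero])⟩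
  have hn'n : n' ∣ n := Dvd.intro_left g hn.symm
  have hζ' : IsPrimitiveRoot (ζ ^ g) n' := hζ.pow (NeZero.pos n) hn
  set π := ZMod.unitsMap hn'n
  have hreduce (u : (ZMod n)ˣ) :
      (ζ ^ (u : ZMod n).val) ^ k = ((ζ ^ g) ^ (π u : ZMod n').val) ^ (k / g) := by
    have hmod : (u : ZMod n).val ≡ (π u : ZMod n').val [MOD n'] := by
      rw [← ZMod.natCast_eq_natCast_iff, ZMod.natCast_val, ZMod.natCast_zmod_val]
      rfl
    rw [← pow_eq_pow_of_modEq hmod hζ'.pow_eq_one, ← pow_mul, ← pow_mul, ← pow_mul, hk,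
      Nat.mul_div_cancel_left _ hg, mul_left_comm]
  have hfibers := π.card_smul_sum_comp_of_surjective (ZMod.unitsMap_surjective hn'n)
    fun v => ((ζ ^ g) ^ (v : ZMod n').val) ^ (k / g)
  rw [← hζ'.sum_primitiveRoots_eq_sum_units (· ^ (k / g)), sum_primitiveRoots_pow_of_coprime
    (Nat.coprime_div_gcd_div_gcd hg), hζ'.sum_primitiveRoots_eq_moebius,
    ZMod.card_units_eq_totient, ZMod.card_units_eq_totient, nsmul_eq_mul, nsmul_eq_mul] at hfibers
  have hφ : (n'.totient : K) ≠ 0 := by exact_mod_cast (Nat.totient_pos.2 (NeZero.pos n')).ne'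
  rw [hζ.sum_primitiveRoots_eq_sum_units, sum_congr rfl fun u _ => hreduce u, vonSterneck]
  push_cast
  rw [eq_div_iff hφ]
  linear_combination hfibers

end IsPrimitiveRoot

theorem sum_Icc_one_pow_eq_ite {R : Type*} [CommRing R] [IsDomain R] [DecidableEq R] {z : R}
    {L : ℕ} (hz : z ^ L = 1) : ∑ k ∈ Icc 1 L, z ^ k = if z = 1 then (L : R) else 0 := by
  split_ifs with h1
  · simp [h1]
  have hgeom : ∑ k ∈ range L, z ^ k = 0 := by
    have h := geom_sum_mul z L
    rw [hz, sub_self] at h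
    exact (mul_eq_zero.1 h).resolve_right (sub_ne_zero.2 h1)
  rw [← Ico_add_one_right_eq_Icc, sum_Ico_eq_sum_range, add_tsub_cancel_right]
  simp_rw [pow_add, pow_one, ← mul_sum, hgeom, mul_zero]

theorem orbE_eq_card_prod_primitiveRoots_eq_one {r : ℕ} (m : Fin r → ℕ) (hm : ∀ j, 0 < m j) :
    orbE m = #{η ∈ Fintype.piFinset fun j => primitiveRoots (m j) ℂ | ∏ j, η j = 1} := by
  have : ∀ j, NeZero (m j) := fun j => ⟨(hm j).ne'⟩
  set L := univ.lcm m
  set T := Fintype.piFinset fun j => primitiveRoots (m j) ℂ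
  have hL : (L : ℂ) ≠ 0 := by
    simpa [L, Finset.lcm_eq_zero_iff] using fun j => (hm j).ne'
  have hprod_pow (η) (hη : η ∈ T) : (∏ j, η j) ^ L = 1 := by
    rw [← prod_pow]
    refine prod_eq_one fun j _ => ?_
    obtain ⟨c, hc⟩ : m j ∣ L := dvd_lcm (mem_univ j)
    have hηj := isPrimitiveRoot_of_mem_primitiveRoots (Fintype.mem_piFinset.1 hη j)
    rw [hc, pow_mul, hηj.pow_eq_one, one_pow]
  have hsum : ((∑ k ∈ Icc 1 L, ∏ j, vonSterneck k (m j) : ℚ) : ℂ) =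
      L * #{η ∈ T | ∏ j, η j = 1} := by
    calc _ = ∑ k ∈ Icc 1 L, ∏ j, ∑ η ∈ primitiveRoots (m j) ℂ, η ^ k := by
          push_cast
          simp_rw [IsPrimitiveRoot.sum_primitiveRoots_pow_eq_vonSterneck
            (Complex.isPrimitiveRoot_exp _ (NeZero.ne _))]
      _ = ∑ η ∈ T, ∑ k ∈ Icc 1 L, (∏ j, η j) ^ k := by
          simp_rw [prod_univ_sum, prod_pow]
          exact sum_comm
      _ = ∑ η ∈ T, if ∏ j, η j = 1 then (L : ℂ) else 0 :=
          sum_congr rfl fun η hη => sum_Icc_one_pow_eq_ite (hprod_pow η hη)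
      _ = L * #{η ∈ T | ∏ j, η j = 1} := by
          rw [sum_ite, sum_const_zero, add_zero, sum_const, nsmul_eq_mul, mul_comm]
  have hC : ((orbE m : ℚ) : ℂ) = (#{η ∈ T | ∏ j, η j = 1} : ℂ) := by
    rw [orbE, Rat.cast_div, hsum, Rat.cast_natCast, mul_div_cancel_left₀ _ hL]
  exact_mod_cast hC

theorem orbE_eq_natCast {r : ℕ} (m : Fin r → ℕ) (hm : ∀ j, 0 < m j) :
    ∃ N : ℕ, orbE m = (N : ℚ) :=
  ⟨_, orbE_eq_card_prod_primitiveRoots_eq_one m hm⟩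
end

section
/- For every tuple of positive integers (m_1,…,m_r) with m = lcm(m_1,…,m_r), the integer φ(m) divides the integer E(m_1,…,m_r), where φ is Euler's totient function. -/
/-!
By Hölder's identity, `Φ(k, n)` is the Ramanujan sum `c_n(k) = ∑ ξ ^ k` over the primitive
`n`-th roots of unity `ξ`: both sides are multiplicative in `n`, and on prime powers they are
computed from `∑_{d ∣ n} c_d(k) = n · [n ∣ k]`. Expanding the product `∏ j, c_{m_j}(k)` and summing
the geometric series over `k`, `E(m_1, …, m_r)` becomes the number of tuples `(ξ_1, …, ξ_r)` of
primitive `m_j`-th roots of unity with `ξ_1 ⋯ ξ_r = 1`. The units of `ℤ/m` act freely on these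
tuples by `a • ξ = (ξ_j ^ a)_j`, so `φ(m)` divides their number.
-/

open Finset ArithmeticFunction Polynomial

section RootsOfUnity

variable {R : Type*} [CommRing R] [IsDomain R] [DecidableEq R]

theorem geom_sum_eq_ite {w : R} {n : ℕ} (hw : w ^ n = 1) :
    ∑ i ∈ range n, w ^ i = if w = 1 then (n : R) else 0 := by
  split_ifs with h
  · simp [h]
  · have : (∑ i ∈ range n, w ^ i) * (w - 1) = 0 := by rw [geom_sum_mul, hw, sub_self]
    exact (mul_eq_zero.mp this).resolve_right (sub_ne_zero.mpr h)

theorem sum_Icc_pow_eq_ite {w : R} {n : ℕ} (hw : w ^ n = 1) :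
    ∑ k ∈ Icc 1 n, w ^ k = if w = 1 then (n : R) else 0 := by
  rw [← Ico_add_one_right_eq_Icc, sum_Ico_eq_sum_range, Nat.add_sub_cancel]
  simp only [pow_add, pow_one, ← mul_sum, geom_sum_eq_ite hw]
  split_ifs with h <;> simp [h]

theorem IsPrimitiveRoot.sum_nthRootsFinset_pow {ζ : R} {n : ℕ} (hζ : IsPrimitiveRoot ζ n)
    (k : ℕ) : ∑ ξ ∈ nthRootsFinset n (1 : R), ξ ^ k = if n ∣ k then (n : R) else 0 := by
  have hroots : nthRootsFinset n (1 : R) = (range n).image (ζ ^ ·) := by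
    ext ξ
    simp [nthRootsFinset_def, hζ.nthRoots_eq (one_pow n)]
  have hswap (i : ℕ) : (ζ ^ i) ^ k = (ζ ^ k) ^ i := by rw [← pow_mul, ← pow_mul, mul_comm]
  rw [hroots, sum_image fun i hi j hj h => hζ.pow_inj (mem_range.mp hi) (mem_range.mp hj) h]
  simp only [hswap]
  rw [geom_sum_eq_ite (by rw [← hswap, hζ.pow_eq_one, one_pow])]
  exact if_congr (hζ.pow_eq_one_iff_dvd k) rfl rfl

end RootsOfUnity

noncomputable def ramanujanSum (k : ℕ) : ArithmeticFunction ℂ :=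
  ⟨fun n => ∑ ξ ∈ primitiveRoots n ℂ, ξ ^ k, by simp⟩

theorem ramanujanSum_apply (k n : ℕ) :
    ramanujanSum k n = ∑ ξ ∈ primitiveRoots n ℂ, ξ ^ k := rfl

def idOfDvd (k : ℕ) : ArithmeticFunction ℂ :=
  ⟨fun d => if d ∣ k then (d : ℂ) else 0, by simp⟩

theorem idOfDvd_apply (k d : ℕ) : idOfDvd k d = if d ∣ k then (d : ℂ) else 0 := rfl

theorem isMultiplicative_idOfDvd (k : ℕ) : (idOfDvd k).IsMultiplicative := by
  refine ⟨by simp [idOfDvd_apply], fun {a b} hab => ?_⟩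
  have hdvd : a * b ∣ k ↔ a ∣ k ∧ b ∣ k :=
    ⟨fun h => ⟨(dvd_mul_right a b).trans h, (dvd_mul_left b a).trans h⟩,
      fun h => hab.mul_dvd_of_dvd_of_dvd h.1 h.2⟩
  by_cases ha : a ∣ k <;> by_cases hb : b ∣ k <;> simp [idOfDvd_apply, hdvd, ha, hb]

-- The `n`-th roots of unity are the disjoint union of the primitive `d`-th roots, `d ∣ n`.
theorem ramanujanSum_mul_zeta (k : ℕ) : ramanujanSum k * ↑zeta = idOfDvd k := by
  ext n
  rw [coe_mul_zeta_apply, idOfDvd_apply]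
  rcases n.eq_zero_or_pos with rfl | hn
  · simp
  simp only [ramanujanSum_apply]
  rw [← sum_biUnion fun i _ j _ hij => IsPrimitiveRoot.disjoint hij,
    ← IsPrimitiveRoot.nthRoots_one_eq_biUnion_primitiveRoots]
  exact (Complex.isPrimitiveRoot_exp n hn.ne').sum_nthRootsFinset_pow k

theorem ramanujanSum_eq_idOfDvd_mul_moebius (k : ℕ) : ramanujanSum k = idOfDvd k * ↑moebius := by
  rw [← ramanujanSum_mul_zeta, mul_assoc, coe_zeta_mul_coe_moebius, mul_one]

theorem isMultiplicative_ramanujanSum (k : ℕ) : (ramanujanSum k).IsMultiplicative := by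
  rw [ramanujanSum_eq_idOfDvd_mul_moebius]
  exact (isMultiplicative_idOfDvd k).mul isMultiplicative_moebius.intCast

theorem ramanujanSum_prime_pow_succ {p : ℕ} (hp : p.Prime) (k s : ℕ) :
    ramanujanSum k (p ^ (s + 1)) = idOfDvd k (p ^ (s + 1)) - idOfDvd k (p ^ s) := by
  have hsum (e : ℕ) : ∑ i ∈ range (e + 1), ramanujanSum k (p ^ i) = idOfDvd k (p ^ e) := by
    rw [← ramanujanSum_mul_zeta, coe_mul_zeta_apply, Nat.sum_divisors_prime_pow hp]
  rw [← hsum, ← hsum, sum_range_succ _ (s + 1), add_sub_cancel_left]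

noncomputable def vonSterneckFun (k : ℕ) : ArithmeticFunction ℂ :=
  ⟨fun n => vonSterneck k n, by simp [vonSterneck]⟩

theorem vonSterneckFun_apply (k n : ℕ) : vonSterneckFun k n = vonSterneck k n := rfl

theorem isMultiplicative_vonSterneckFun (k : ℕ) : (vonSterneckFun k).IsMultiplicative := by
  refine ⟨by simp [vonSterneckFun_apply, vonSterneck], fun {a b} hab => ?_⟩
  have hda := Nat.gcd_dvd_right k a
  have hdb := Nat.gcd_dvd_right k b
  have hcop : (a / k.gcd a).Coprime (b / k.gcd b) :=
    (hab.coprime_dvd_left (Nat.div_dvd_of_dvd hda)).coprime_dvd_right (Nat.div_dvd_of_dvd hdb)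
  simp only [vonSterneckFun_apply, vonSterneck]
  rw [hab.gcd_mul k, ← Nat.div_mul_div_comm hda hdb,
    isMultiplicative_moebius.map_mul_of_coprime hcop, Nat.totient_mul hab, Nat.totient_mul hcop]
  push_cast
  rw [div_mul_div_comm]
  ring

theorem vonSterneckFun_prime_pow_succ {p : ℕ} (hp : p.Prime) (k s : ℕ) :
    vonSterneckFun k (p ^ (s + 1)) = idOfDvd k (p ^ (s + 1)) - idOfDvd k (p ^ s) := by
  obtain ⟨e, he, hg⟩ := (Nat.dvd_prime_pow hp).mp (Nat.gcd_dvd_right k (p ^ (s + 1)))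
  have hdvd {i : ℕ} (hi : i ≤ s + 1) : p ^ i ∣ k ↔ i ≤ e := by
    rw [← Nat.pow_dvd_pow_iff_le_right hp.one_lt, ← hg, Nat.dvd_gcd_iff,
      and_iff_left (Nat.pow_dvd_pow p hi)]
  obtain ⟨t, ht⟩ : ∃ t, s + 1 = e + t := ⟨s + 1 - e, by omega⟩
  have hquot : p ^ (s + 1) / p ^ e = p ^ t := by
    rw [ht, pow_add, Nat.mul_div_cancel_left _ (pow_pos hp.pos e)]
  simp only [vonSterneckFun_apply, idOfDvd_apply, vonSterneck, hg, hquot,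
    hdvd le_rfl, hdvd (Nat.le_succ s)]
  rcases t with _ | _ | t
  · obtain rfl : e = s + 1 := by omega
    simp [Nat.totient_prime_pow_succ hp, Nat.cast_sub hp.one_le]
    ring
  · obtain rfl : e = s := by omega
    have hp1 : (p : ℂ) - 1 ≠ 0 := sub_ne_zero.mpr (by exact_mod_cast hp.one_lt.ne')
    simp [Nat.totient_prime_pow_succ hp, Nat.cast_sub hp.one_le, moebius_apply_prime hp,
      Nat.totient_prime hp]
    field_simp
  · simp [moebius_apply_prime_pow hp, show ¬ s ≤ e by omega, show ¬ s + 1 ≤ e by omega]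

theorem vonSterneckFun_eq_ramanujanSum (k : ℕ) : vonSterneckFun k = ramanujanSum k := by
  refine (IsMultiplicative.eq_iff_eq_on_prime_powers _ (isMultiplicative_vonSterneckFun k) _
    (isMultiplicative_ramanujanSum k)).mpr fun p i hp => ?_
  rcases i with _ | s
  · simp [(isMultiplicative_vonSterneckFun k).map_one, (isMultiplicative_ramanujanSum k).map_one]
  · rw [vonSterneckFun_prime_pow_succ hp, ramanujanSum_prime_pow_succ hp]

theorem pow_mem_primitiveRoots {R : Type*} [CommRing R] [IsDomain R] {ξ : R} {n a : ℕ}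
    (hξ : ξ ∈ primitiveRoots n R) (ha : a.Coprime n) : ξ ^ a ∈ primitiveRoots n R := by
  have hn : 0 < n := Nat.pos_of_ne_zero fun h => by simp [h] at hξ
  rw [mem_primitiveRoots hn] at hξ ⊢
  exact hξ.pow_of_coprime a ha

theorem IsPrimitiveRoot.pi_lcm {ι M : Type*} [Fintype ι] [CommMonoid M] {ξ : ι → M}
    {m : ι → ℕ} (h : ∀ j, IsPrimitiveRoot (ξ j) (m j)) : IsPrimitiveRoot ξ (univ.lcm m) :=
  ⟨funext fun j => ((h j).pow_eq_one_iff_dvd _).mpr (dvd_lcm (mem_univ j)),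
    fun l hl => lcm_dvd fun j _ => (h j).dvd_of_pow_eq_one l (congr_fun hl j)⟩

section PrimitiveRootTuples

variable {ι : Type*} [Fintype ι] [DecidableEq ι] (m : ι → ℕ)

noncomputable def primitiveRootTuples : Finset (ι → ℂ) :=
  {ξ ∈ Fintype.piFinset fun j => primitiveRoots (m j) ℂ | ∏ j, ξ j = 1}

variable {m}

theorem mem_primitiveRootTuples {ξ : ι → ℂ} :
    ξ ∈ primitiveRootTuples m ↔ (∀ j, ξ j ∈ primitiveRoots (m j) ℂ) ∧ ∏ j, ξ j = 1 := by
  simp [primitiveRootTuples]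

theorem isPrimitiveRoot_of_mem_primitiveRootTuples {ξ : ι → ℂ} (h : ξ ∈ primitiveRootTuples m) :
    IsPrimitiveRoot ξ (univ.lcm m) :=
  IsPrimitiveRoot.pi_lcm fun j =>
    isPrimitiveRoot_of_mem_primitiveRoots ((mem_primitiveRootTuples.mp h).1 j)

theorem pow_mem_primitiveRootTuples {ξ : ι → ℂ} (h : ξ ∈ primitiveRootTuples m) {a : ℕ}
    (ha : a.Coprime (univ.lcm m)) : ξ ^ a ∈ primitiveRootTuples m := by
  rw [mem_primitiveRootTuples] at h ⊢
  refine ⟨fun j => pow_mem_primitiveRoots (h.1 j) (ha.coprime_dvd_right (dvd_lcm (mem_univ j))),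
    ?_⟩
  simp only [Pi.pow_apply]
  rw [prod_pow, h.2, one_pow]

theorem primitiveRootTuples_eq_empty (h : univ.lcm m = 0) : primitiveRootTuples m = ∅ := by
  obtain ⟨j, -, hj⟩ := Finset.lcm_eq_zero_iff.mp h
  exact eq_empty_of_forall_notMem fun ξ hξ => by
    simpa [hj] using (mem_primitiveRootTuples.mp hξ).1 j

variable (m)

theorem sum_Icc_prod_ramanujanSum :
    ∑ k ∈ Icc 1 (univ.lcm m), ∏ j, ramanujanSum k (m j) =
      univ.lcm m * #(primitiveRootTuples m) := by
  set M := univ.lcm m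
  have hpow (ξ) (hξ : ξ ∈ Fintype.piFinset fun j => primitiveRoots (m j) ℂ) :
      (∏ j, ξ j) ^ M = 1 := by
    rw [← prod_pow]
    exact prod_eq_one fun j _ => ((isPrimitiveRoot_of_mem_primitiveRoots
      (Fintype.mem_piFinset.mp hξ j)).pow_eq_one_iff_dvd _).mpr (dvd_lcm (mem_univ j))
  calc ∑ k ∈ Icc 1 M, ∏ j, ramanujanSum k (m j)
      = ∑ ξ ∈ Fintype.piFinset fun j => primitiveRoots (m j) ℂ, ∑ k ∈ Icc 1 M, (∏ j, ξ j) ^ k := by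
        simp only [ramanujanSum_apply, prod_univ_sum, ← prod_pow]
        exact sum_comm
    _ = ∑ ξ ∈ Fintype.piFinset fun j => primitiveRoots (m j) ℂ,
          if ∏ j, ξ j = 1 then (M : ℂ) else 0 :=
        sum_congr rfl fun ξ hξ => sum_Icc_pow_eq_ite (hpow ξ hξ)
    _ = M * #(primitiveRootTuples m) := by
        rw [← sum_filter, sum_const, nsmul_eq_mul, mul_comm]
        rfl

theorem eq_one_of_pow_val_eq_self [NeZero (univ.lcm m)] {ξ : ι → ℂ}
    (hξ : ξ ∈ primitiveRootTuples m) {a : (ZMod (univ.lcm m))ˣ}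
    (h : ξ ^ (a : ZMod (univ.lcm m)).val = ξ) : a = 1 := by
  have hprim := isPrimitiveRoot_of_mem_primitiveRootTuples hξ
  have hmod := (hprim.isOfFinOrder (NeZero.ne _)).pow_eq_pow_iff_modEq.mp (h.trans (pow_one ξ).symm)
  rw [← hprim.eq_orderOf] at hmod
  ext
  rw [← ZMod.natCast_zmod_val (a : ZMod (univ.lcm m)),
    (ZMod.natCast_eq_natCast_iff _ _ _).mpr hmod, Nat.cast_one, Units.val_one]

noncomputable abbrev primitiveRootTuplesMulAction :
    MulAction (ZMod (univ.lcm m))ˣ (primitiveRootTuples m) where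
  smul a ξ := ⟨ξ.1 ^ (a : ZMod (univ.lcm m)).val,
    pow_mem_primitiveRootTuples ξ.2 (ZMod.val_coe_unit_coprime a)⟩
  one_smul ξ := Subtype.ext <| (pow_eq_pow_of_modEq
    (by rw [Units.val_one, ZMod.val_one_eq_one_mod]; exact Nat.mod_modEq 1 _)
    (isPrimitiveRoot_of_mem_primitiveRootTuples ξ.2).pow_eq_one).trans (pow_one _)
  mul_smul a b ξ := Subtype.ext <| by
    change ξ.1 ^ _ = (ξ.1 ^ _) ^ _
    rw [← pow_mul, Units.val_mul, ZMod.val_mul, mul_comm (ZMod.val _)]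
    exact pow_eq_pow_of_modEq (Nat.mod_modEq _ _)
      (isPrimitiveRoot_of_mem_primitiveRootTuples ξ.2).pow_eq_one

theorem totient_lcm_dvd_card_primitiveRootTuples :
    Nat.totient (univ.lcm m) ∣ #(primitiveRootTuples m) := by
  rcases eq_or_ne (univ.lcm m) 0 with h | h
  · simp [primitiveRootTuples_eq_empty h]
  have : NeZero (univ.lcm m) := ⟨h⟩
  let := primitiveRootTuplesMulAction m
  have hfree (ξ : primitiveRootTuples m) : MulAction.stabilizer (ZMod (univ.lcm m))ˣ ξ = ⊥ :=
    (Subgroup.eq_bot_iff_forall _).mpr fun _ ha =>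
      eq_one_of_pow_val_eq_self m ξ.2 (congr_arg Subtype.val ha)
  rw [← ZMod.card_units_eq_totient, ← Nat.card_eq_fintype_card, ← Nat.card_eq_finsetCard,
    Nat.card_congr (MulAction.selfEquivOrbitsQuotientProd hfree), Nat.card_prod]
  exact dvd_mul_left _ _

end PrimitiveRootTuples

theorem orbE_eq_card_primitiveRootTuples {r : ℕ} (m : Fin r → ℕ) :
    orbE m = #(primitiveRootTuples m) := by
  have hsum : ∑ k ∈ Icc 1 (univ.lcm m), ∏ j, vonSterneck k (m j) =
      ((univ.lcm m : ℕ) : ℚ) * #(primitiveRootTuples m) := by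
    have := sum_Icc_prod_ramanujanSum m
    simp only [← vonSterneckFun_eq_ramanujanSum, vonSterneckFun_apply] at this
    exact_mod_cast this
  rw [orbE, hsum]
  rcases eq_or_ne (univ.lcm m) 0 with h | h
  · -- both sides vanish: `orbE` divides by `0`
    simp [h, primitiveRootTuples_eq_empty h]
  · exact mul_div_cancel_left₀ _ (Nat.cast_ne_zero.mpr h)

theorem totient_lcm_dvd_orbE_general {r : ℕ} (m : Fin r → ℕ) :
    ((Nat.totient (Finset.univ.lcm m) : ℤ)) ∣ (orbE m).num := by
  rw [orbE_eq_card_primitiveRootTuples, Rat.num_natCast]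
  exact_mod_cast totient_lcm_dvd_card_primitiveRootTuples m

theorem totient_lcm_dvd_orbE {r : ℕ} (m : Fin r → ℕ) (hm : ∀ j, 0 < m j) :
    ((Nat.totient (Finset.univ.lcm m) : ℤ)) ∣ (orbE m).num :=
  totient_lcm_dvd_orbE_general m
end

section
/- Fix r ≥ 1 and define f_r(n) = E(n, n, …, n) (r copies of n) for positive integers n. Then f_r is a multiplicative arithmetic function (f_r(1) = 1 and f_r(n₁n₂) = f_r(n₁)·f_r(n₂) for coprime n₁, n₂), and for every prime p and every a ≥ 1, f_r(p^a) = (p−1)·p^{(r−1)(a−1)}·h_r(p), where h_r(x) = ((x−1)^{r−1} + (−1)^r)/x. -/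
/-!
`Φ(k, n)` depends on `k` only through `k mod n` and is multiplicative in `n` for coprime moduli,
so by the Chinese remainder theorem `∑_{k ≤ n} Φ(k, n)^r`, which is `n · E(n, …, n)`, is
multiplicative in `n`. Modulo `p^(a+1)`, `Φ(k, p^(a+1))` vanishes unless `p^a ∣ k`; it equals
`-p^a` for the `p - 1` residues `p^a j` with `p ∤ j` and `φ(p^(a+1))` at `k ≡ 0`, which gives the
value at prime powers.
-/

open Finset

lemma vonSterneck_mod (k n : ℕ) : vonSterneck (k % n) n = vonSterneck k n := by
  rw [vonSterneck, vonSterneck, ← Nat.gcd_rec n k, Nat.gcd_comm]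

lemma vonSterneck_val_natCast (k n : ℕ) : vonSterneck (k : ZMod n).val n = vonSterneck k n := by
  rw [ZMod.val_natCast, vonSterneck_mod]

lemma vonSterneck_mul_of_coprime_s14 (k : ℕ) {m n : ℕ} (h : m.Coprime n) :
    vonSterneck k (m * n) = vonSterneck k m * vonSterneck k n := by
  have hm := Nat.gcd_dvd_right k m
  have hn := Nat.gcd_dvd_right k n
  have hquot : (m * n) / k.gcd (m * n) = (m / k.gcd m) * (n / k.gcd n) := by
    rw [h.gcd_mul k, Nat.div_mul_div_comm hm hn]
  have hcop : (m / k.gcd m).Coprime (n / k.gcd n) :=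
    (h.coprime_dvd_left (Nat.div_dvd_of_dvd hm)).coprime_dvd_right (Nat.div_dvd_of_dvd hn)
  simp only [vonSterneck, hquot, Nat.totient_mul hcop, Nat.totient_mul h,
    ArithmeticFunction.isMultiplicative_moebius.map_mul_of_coprime hcop]
  -- no denominator needs to be nonzero: in a field `(x * y)⁻¹ = x⁻¹ * y⁻¹` holds unconditionally
  push_cast
  ring

lemma vonSterneck_self (n : ℕ) : vonSterneck n n = n.totient := by
  rcases n.eq_zero_or_pos with rfl | hn
  · simp [vonSterneck]
  · simp [vonSterneck, Nat.div_self hn]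

lemma vonSterneck_prime_pow_succ_of_not_dvd {p a k : ℕ} (hp : p.Prime) (hk : ¬ p ^ a ∣ k) :
    vonSterneck k (p ^ (a + 1)) = 0 := by
  obtain ⟨c, hc, hgcd⟩ := (Nat.dvd_prime_pow hp).mp (Nat.gcd_dvd_right k (p ^ (a + 1)))
  have hca : c < a := by
    by_contra! hac
    exact hk ((pow_dvd_pow p hac).trans (hgcd ▸ Nat.gcd_dvd_left k _))
  rw [vonSterneck, hgcd, Nat.pow_div hc hp.pos,
    ArithmeticFunction.moebius_apply_prime_pow hp (by omega), if_neg (by omega)]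
  simp

lemma vonSterneck_pow_mul_prime_pow_succ {p a j : ℕ} (hp : p.Prime) (hj : ¬ p ∣ j) :
    vonSterneck (p ^ a * j) (p ^ (a + 1)) = -(p : ℚ) ^ a := by
  have hgcd : (p ^ a * j).gcd (p ^ (a + 1)) = p ^ a := by
    rw [pow_succ, Nat.gcd_mul_left, Nat.Coprime.gcd_eq_one, mul_one]
    exact (Nat.coprime_comm.mp ((hp.coprime_iff_not_dvd).mpr hj))
  have hp1 : ((p - 1 : ℕ) : ℚ) ≠ 0 := by
    have := hp.two_le
    exact_mod_cast (by omega : p - 1 ≠ 0)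
  rw [vonSterneck, hgcd, Nat.pow_div (by omega) hp.pos, Nat.add_sub_cancel_left, pow_one,
    ArithmeticFunction.moebius_apply_prime hp, Nat.totient_prime hp,
    Nat.totient_prime_pow_succ hp]
  push_cast
  field_simp

lemma sum_Icc_one_mul_eq_of_not_dvd_eq_zero {M : Type*} [AddCommMonoid M] {d : ℕ} (hd : 0 < d)
    (m : ℕ) (F : ℕ → M) (hF : ∀ k, ¬ d ∣ k → F k = 0) :
    ∑ k ∈ Icc 1 (d * m), F k = ∑ j ∈ Icc 1 m, F (d * j) := by
  rw [← sum_image (fun x _ y _ hxy => Nat.eq_of_mul_eq_mul_left hd hxy)]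
  refine (sum_subset ?_ ?_).symm
  · intro k hk
    obtain ⟨j, hj, rfl⟩ := mem_image.mp hk
    simp only [mem_Icc] at hj ⊢
    exact ⟨Nat.mul_pos hd hj.1, Nat.mul_le_mul_left d hj.2⟩
  · intro k hk hk'
    refine hF k fun ⟨j, hj⟩ => hk' (mem_image.mpr ⟨j, ?_, hj.symm⟩)
    simp only [mem_Icc, hj] at hk ⊢
    exact ⟨Nat.pos_of_mul_pos_left hk.1, Nat.le_of_mul_le_mul_left hk.2 hd⟩

lemma ZMod.sum_Icc_one_natCast {M : Type*} [AddCommMonoid M] (n : ℕ) [NeZero n]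
    (f : ZMod n → M) : ∑ k ∈ Icc 1 n, f k = ∑ x, f x := by
  refine sum_nbij (fun k : ℕ => (k : ZMod n)) (fun _ _ => mem_univ _) ?_ ?_ fun _ _ => rfl
  · intro a ha b hb hab
    simp only [coe_Icc, Set.mem_Icc] at ha hb
    refine ((ZMod.natCast_eq_natCast_iff a b n).mp hab).eq_of_abs_lt ?_
    rw [abs_lt]
    omega
  · intro x _
    by_cases hx : x = 0
    · exact ⟨n, by simp [NeZero.one_le], by simp [hx]⟩
    · refine ⟨x.val, ?_, ZMod.natCast_zmod_val x⟩
      simp [Nat.one_le_iff_ne_zero, (ZMod.val_lt x).le, hx]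

lemma ZMod.sum_cast_mul_cast_of_coprime {R : Type*} [CommSemiring R] {m n : ℕ} [NeZero m]
    [NeZero n] (h : m.Coprime n) (f : ZMod m → R) (g : ZMod n → R) :
    ∑ x : ZMod (m * n), f (ZMod.cast x) * g (ZMod.cast x) = (∑ y, f y) * ∑ z, g z := by
  rw [sum_mul_sum, ← Fintype.sum_prod_type']
  exact Fintype.sum_equiv (ZMod.chineseRemainder h).toEquiv _ _ fun x =>
    congr_arg₂ (f · * g ·) (Prod.fst_zmod_cast x).symm (Prod.snd_zmod_cast x).symm

lemma sum_vonSterneck_pow_eq_sum_zmod (r n : ℕ) [NeZero n] :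
    ∑ k ∈ Icc 1 n, vonSterneck k n ^ r = ∑ x : ZMod n, vonSterneck x.val n ^ r := by
  simp only [← ZMod.sum_Icc_one_natCast n (fun x => vonSterneck x.val n ^ r),
    vonSterneck_val_natCast]

lemma sum_vonSterneck_pow_mul_of_coprime (r : ℕ) {m n : ℕ} [NeZero m] [NeZero n]
    (h : m.Coprime n) :
    ∑ k ∈ Icc 1 (m * n), vonSterneck k (m * n) ^ r =
      (∑ k ∈ Icc 1 m, vonSterneck k m ^ r) * ∑ k ∈ Icc 1 n, vonSterneck k n ^ r := by
  rw [sum_vonSterneck_pow_eq_sum_zmod, sum_vonSterneck_pow_eq_sum_zmod,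
    sum_vonSterneck_pow_eq_sum_zmod, ← ZMod.sum_cast_mul_cast_of_coprime h]
  refine sum_congr rfl fun x _ => ?_
  rw [vonSterneck_mul_of_coprime_s14 _ h, mul_pow, ZMod.cast_eq_val, ZMod.cast_eq_val,
    vonSterneck_val_natCast, vonSterneck_val_natCast]

lemma sum_vonSterneck_pow_prime_pow {r : ℕ} (hr : r ≠ 0) {p : ℕ} (hp : p.Prime) (a : ℕ) :
    ∑ k ∈ Icc 1 (p ^ (a + 1)), vonSterneck k (p ^ (a + 1)) ^ r =
      (p - 1) * (-(p : ℚ) ^ a) ^ r + ((p : ℚ) ^ a * (p - 1)) ^ r := by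
  have hvanish (k : ℕ) (hk : ¬ p ^ a ∣ k) : vonSterneck k (p ^ (a + 1)) ^ r = 0 := by
    rw [vonSterneck_prime_pow_succ_of_not_dvd hp hk, zero_pow hr]
  rw [pow_succ,
    sum_Icc_one_mul_eq_of_not_dvd_eq_zero (pow_pos hp.pos a) p _ (by rwa [← pow_succ]),
    ← Ico_add_one_right_eq_Icc, sum_Ico_succ_top hp.one_le, ← pow_succ, vonSterneck_self,
    Nat.totient_prime_pow_succ hp]
  have hunit (j : ℕ) (hj : j ∈ Ico 1 p) :
      vonSterneck (p ^ a * j) (p ^ (a + 1)) ^ r = (-(p : ℚ) ^ a) ^ r := by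
    obtain ⟨hj1, hjp⟩ := mem_Ico.mp hj
    rw [vonSterneck_pow_mul_prime_pow_succ hp (Nat.not_dvd_of_pos_of_lt hj1 hjp)]
  rw [sum_congr rfl hunit, sum_const, Nat.card_Ico, nsmul_eq_mul]
  push_cast [hp.one_le]
  ring

lemma orbE_const {r : ℕ} (hr : r ≠ 0) (n : ℕ) :
    orbE (fun _ : Fin r => n) = (∑ k ∈ Icc 1 n, vonSterneck k n ^ r) / n := by
  have hlcm : univ.lcm (fun _ : Fin r => n) = n :=
    Nat.dvd_antisymm (Finset.lcm_dvd fun _ _ => dvd_rfl)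
      (Finset.dvd_lcm (mem_univ (⟨0, Nat.pos_of_ne_zero hr⟩ : Fin r)))
  simp only [orbE, hlcm, prod_const, card_univ, Fintype.card_fin]

lemma orbE_const_prime_pow {r : ℕ} (hr : r ≠ 0) {p : ℕ} (hp : p.Prime) (a : ℕ) :
    orbE (fun _ : Fin r => p ^ (a + 1)) =
      ((p : ℚ) - 1) * (p : ℚ) ^ ((r - 1) * a) * hpoly r p := by
  rw [orbE_const hr, sum_vonSterneck_pow_prime_pow hr hp a, hpoly]
  obtain ⟨s, rfl⟩ : ∃ s, r = s + 1 := ⟨r - 1, by omega⟩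
  have hp0 : (p : ℚ) ≠ 0 := Nat.cast_ne_zero.mpr hp.ne_zero
  rw [Nat.add_sub_cancel, mul_comm s a, pow_mul, neg_pow, mul_pow]
  push_cast
  field_simp
  ring

theorem orbE_diagonal_multiplicative (r : ℕ) (hr : 1 ≤ r) :
    (orbE (fun _ : Fin r => 1) = 1) ∧
    (∀ n₁ n₂ : ℕ, 0 < n₁ → 0 < n₂ → Nat.Coprime n₁ n₂ →
      orbE (fun _ : Fin r => n₁ * n₂) =
        orbE (fun _ : Fin r => n₁) * orbE (fun _ : Fin r => n₂)) ∧
    (∀ p a : ℕ, p.Prime → 1 ≤ a →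
      orbE (fun _ : Fin r => p ^ a) =
        ((p : ℚ) - 1) * (p : ℚ) ^ ((r - 1) * (a - 1)) * hpoly r (p : ℚ)) := by
  have hr0 : r ≠ 0 := Nat.one_le_iff_ne_zero.mp hr
  refine ⟨?_, fun n₁ n₂ h₁ h₂ h => ?_, fun p a hp ha => ?_⟩
  · simp [orbE_const hr0, vonSterneck_self]
  · have : NeZero n₁ := ⟨h₁.ne'⟩
    have : NeZero n₂ := ⟨h₂.ne'⟩
    rw [orbE_const hr0, orbE_const hr0, orbE_const hr0, sum_vonSterneck_pow_mul_of_coprime r h,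
      Nat.cast_mul, mul_div_mul_comm]
  · obtain ⟨b, rfl⟩ := Nat.exists_eq_add_of_le' ha
    exact orbE_const_prime_pow hr0 hp b
end
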